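/- arXiv:2401.16480 — 2 statements merged into one kernel-verified Lean document; each statement's English description precedes it below -/
import Mathlib

section
/- (Lemma 1.) Let n be an occupation configuration and f ≤ M−2 a site with n_f = 1, n_{f+1} = 0 and n_{f+2} = 0, and suppose γ_f ≠ 0 and γ_{f+1} ≠ 0. Given arbitrary spin vectors v_1,…,v_M ∈ ℂ², define v'_{f+1}, v'_{f+2} ∈ ℂ² by v'_{f+1}(1) = −γ_f v_{f+1}(1) + J_f v_{f+1}(0), v'_{f+1}(0) = −γ_f v_{f+1}(0), v'_{f+2}(1) = (1/γ_{f+1}) v_{f+2}(1), v'_{f+2}(0) = (J_{f+1}/γ_{f+1}²) v_{f+2}(1) + (1/γ_{f+1}) v_{f+2}(0); let w be the family of spin vectors equal to v except w_{f+1} = v'_{f+1} and w_{f+2} = v'_{f+2}, and let n' = n[f↦0][f+2↦1]. Then ĥ^{(R)}_f Π(n, v) + ĥ^{(L)}_{f+2} Π(n', w) = 0. -/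
open scoped BigOperators

namespace QuantumBreakdown

/-- Basis index: pairs of an occupation configuration and a spin configuration. -/
abbrev Cfg (M : ℕ) := (Fin M → Bool) × (Fin M → Bool)

/-- The Hilbert space `V_M`. -/
abbrev V (M : ℕ) := Cfg M → ℂ

/-- The basis vector `e_{n,s}`. -/
noncomputable def e (M : ℕ) (p : Cfg M) : V M := Pi.single p 1

/-- The linear operator determined by prescribed images of the basis vectors. -/
noncomputable def mkOp (M : ℕ) (f : Cfg M → V M) : V M →ₗ[ℂ] V M :=
  (Pi.basisFun ℂ (Cfg M)).constr ℂ f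

/-- The left site of edge `m`. -/
def sL (M : ℕ) (m : Fin (M - 1)) : Fin M := ⟨m.1, by have := m.2; omega⟩

/-- The right site of edge `m`. -/
def sR (M : ℕ) (m : Fin (M - 1)) : Fin M := ⟨m.1 + 1, by have := m.2; omega⟩

/-- Move a fermion from site `a` to site `b`. -/
def hop (M : ℕ) (n : Fin M → Bool) (a b : Fin M) : Fin M → Bool :=
  Function.update (Function.update n a false) b true

/-- The hopping term `H_γ`. -/
noncomputable def Hgam (M : ℕ) (γ : Fin (M - 1) → ℝ) : V M →ₗ[ℂ] V M :=
  mkOp M fun p =>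
    -∑ m : Fin (M - 1), (γ m : ℂ) •
      ((if p.1 (sL M m) = true ∧ p.1 (sR M m) = false then
          e M (hop M p.1 (sL M m) (sR M m), p.2) else 0)
        +
       (if p.1 (sR M m) = true ∧ p.1 (sL M m) = false then
          e M (hop M p.1 (sR M m) (sL M m), p.2) else 0))

/-- The breakdown interaction `H_J`. -/
noncomputable def HJop (M : ℕ) (J : Fin (M - 1) → ℝ) : V M →ₗ[ℂ] V M :=
  mkOp M fun p =>
    ∑ m : Fin (M - 1), (J m : ℂ) •
      ((if p.1 (sL M m) = true ∧ p.1 (sR M m) = false ∧ p.2 (sR M m) = false then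
          e M (hop M p.1 (sL M m) (sR M m), Function.update p.2 (sR M m) true) else 0)
        +
       (if p.1 (sR M m) = true ∧ p.1 (sL M m) = false ∧ p.2 (sR M m) = true then
          e M (hop M p.1 (sR M m) (sL M m), Function.update p.2 (sR M m) false) else 0))

/-- The on-site potential `H_μ`. -/
noncomputable def Hmu (M : ℕ) (μ : Fin M → ℝ) : V M →ₗ[ℂ] V M :=
  mkOp M fun p => (∑ m : Fin M, if p.1 m = true then (μ m : ℂ) else 0) • e M p

/-- Pauli `σ^x` at site `m`. -/
noncomputable def sigx (M : ℕ) (m : Fin M) : V M →ₗ[ℂ] V M :=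
  mkOp M fun p => e M (p.1, Function.update p.2 m (!p.2 m))

/-- Pauli `σ^y` at site `m`. -/
noncomputable def sigy (M : ℕ) (m : Fin M) : V M →ₗ[ℂ] V M :=
  mkOp M fun p =>
    (if p.2 m = true then Complex.I else -Complex.I) • e M (p.1, Function.update p.2 m (!p.2 m))

/-- Pauli `σ^z` at site `m`. -/
noncomputable def sigz (M : ℕ) (m : Fin M) : V M →ₗ[ℂ] V M :=
  mkOp M fun p => (if p.2 m = true then (1 : ℂ) else -1) • e M p

/-- The magnetic field term `H_h`. -/
noncomputable def Hh (M : ℕ) (hx hy hz : Fin M → ℝ) : V M →ₗ[ℂ] V M :=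
  ∑ m : Fin M, ((hx m : ℂ) • sigx M m + (hy m : ℂ) • sigy M m + (hz m : ℂ) • sigz M m)

/-- Number of occupied sites of an occupation configuration. -/
def nOcc (M : ℕ) (n : Fin M → Bool) : ℕ := (Finset.univ.filter fun m => n m = true).card

/-- The number operator `N`. -/
noncomputable def numOp (M : ℕ) : V M →ₗ[ℂ] V M :=
  mkOp M fun p => (nOcc M p.1 : ℂ) • e M p

/-- The charge-`Q` sector `W_Q`. -/
noncomputable def sector (M Q : ℕ) : Submodule ℂ (V M) :=
  Submodule.span ℂ { v | ∃ p : Cfg M, nOcc M p.1 = Q ∧ v = e M p }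

/-- The charge-`Q` sector with first spin up, `W_Q^↑`. -/
noncomputable def sectorUp (M : ℕ) (hM : 0 < M) (Q : ℕ) : Submodule ℂ (V M) :=
  Submodule.span ℂ { v | ∃ p : Cfg M, nOcc M p.1 = Q ∧ p.2 ⟨0, hM⟩ = true ∧ v = e M p }

end QuantumBreakdown

namespace QuantumBreakdown

/-- The right-hop term `ĥ^{(R)}_m` associated with edge `m` (moving a fermion
from site `m` to site `m+1`). -/
noncomputable def hRop (M : ℕ) (γ J : Fin (M - 1) → ℝ) (m : Fin (M - 1)) :
    V M →ₗ[ℂ] V M :=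
  mkOp M fun p =>
    if p.1 (sL M m) = true ∧ p.1 (sR M m) = false then
      (-(γ m : ℂ)) • e M (hop M p.1 (sL M m) (sR M m), p.2)
        + (if p.2 (sR M m) = false then
            (J m : ℂ) • e M (hop M p.1 (sL M m) (sR M m), Function.update p.2 (sR M m) true)
          else 0)
    else 0

/-- The left-hop term `ĥ^{(L)}_{m+1}` associated with edge `m` (moving a fermion
from site `m+1` to site `m`). -/
noncomputable def hLop (M : ℕ) (γ J : Fin (M - 1) → ℝ) (m : Fin (M - 1)) :
    V M →ₗ[ℂ] V M :=
  mkOp M fun p =>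
    if p.1 (sR M m) = true ∧ p.1 (sL M m) = false then
      (-(γ m : ℂ)) • e M (hop M p.1 (sR M m) (sL M m), p.2)
        + (if p.2 (sR M m) = true then
            (J m : ℂ) • e M (hop M p.1 (sR M m) (sL M m), Function.update p.2 (sR M m) false)
          else 0)
    else 0

end QuantumBreakdown

namespace QuantumBreakdown

/-- The product state `Π(n,v) = ∑_s (∏_m v_m(s_m)) e_{n,s}` built from site-wise
spin vectors `v_m ∈ ℂ²` (components indexed by `Bool`). -/
noncomputable def prodState (M : ℕ) (n : Fin M → Bool) (v : Fin M → Bool → ℂ) : V M :=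
  ∑ s : Fin M → Bool, (∏ m : Fin M, v m (s m)) • e M (n, s)

end QuantumBreakdown

namespace QuantumBreakdown

set_option linter.dupNamespace false

lemma mkOp_apply_e' (M : ℕ) (f : Cfg M → V M) (p : Cfg M) : mkOp M f (e M p) = f p := by
  have h : e M p = Pi.basisFun ℂ (Cfg M) p := by
    simp [e, Pi.basisFun_apply]
  rw [mkOp, h, Module.Basis.constr_basis]

lemma hRop_apply_e' (M : ℕ) (γ J : Fin (M-1) → ℝ) (m : Fin (M-1)) (p : Cfg M) :
    hRop M γ J m (e M p) =
    if p.1 (sL M m) = true ∧ p.1 (sR M m) = false then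
      (-(γ m : ℂ)) • e M (hop M p.1 (sL M m) (sR M m), p.2)
        + (if p.2 (sR M m) = false then
            (J m : ℂ) • e M (hop M p.1 (sL M m) (sR M m), Function.update p.2 (sR M m) true)
          else 0)
    else 0 := by
  unfold hRop; exact mkOp_apply_e' _ _ _

lemma hLop_apply_e' (M : ℕ) (γ J : Fin (M-1) → ℝ) (m : Fin (M-1)) (p : Cfg M) :
    hLop M γ J m (e M p) =
    if p.1 (sR M m) = true ∧ p.1 (sL M m) = false then
      (-(γ m : ℂ)) • e M (hop M p.1 (sR M m) (sL M m), p.2)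
        + (if p.2 (sR M m) = true then
            (J m : ℂ) • e M (hop M p.1 (sR M m) (sL M m), Function.update p.2 (sR M m) false)
          else 0)
    else 0 := by
  unfold hLop; exact mkOp_apply_e' _ _ _

lemma op_prodState' (M : ℕ) (op : V M →ₗ[ℂ] V M) (nn : Fin M → Bool) (vv : Fin M → Bool → ℂ) :
    op (prodState M nn vv) = ∑ s : Fin M → Bool, (∏ m : Fin M, vv m (s m)) • op (e M (nn, s)) := by
  simp [prodState, map_sum, map_smul]

end QuantumBreakdown

namespace QuantumBreakdown

set_option linter.dupNamespace false
set_option maxHeartbeats 1000000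

lemma cancel_aux (M : ℕ) (γ J : Fin (M - 1) → ℝ)
    (ef ef1 : Fin (M - 1)) (f f1 f2 : Fin M)
    (hL1 : sL M ef = f) (hR1 : sR M ef = f1)
    (hL2 : sL M ef1 = f1) (hR2 : sR M ef1 = f2)
    (hf12 : f1 ≠ f2)
    (n : Fin M → Bool) (hn : n f = true) (hn1 : n f1 = false)
    (n' : Fin M → Bool) (hn'1 : n' f1 = false) (hn'2 : n' f2 = true)
    (hhop : hop M n' f2 f1 = hop M n f f1)
    (hγ2 : (γ ef1 : ℂ) ≠ 0)
    (v : Fin M → Bool → ℂ) (v1' v2' : Bool → ℂ)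
    (hv1t : v1' true = -(γ ef : ℂ) * v f1 true + (J ef : ℂ) * v f1 false)
    (hv1f : v1' false = -(γ ef : ℂ) * v f1 false)
    (hv2t : v2' true = ((γ ef1 : ℂ))⁻¹ * v f2 true)
    (hv2f : v2' false = ((J ef1 : ℂ) / (γ ef1 : ℂ) ^ 2) * v f2 true
        + ((γ ef1 : ℂ))⁻¹ * v f2 false)
    (w : Fin M → Bool → ℂ)
    (hwf1 : w f1 = v1') (hwf2 : w f2 = v2')
    (hwo : ∀ m : Fin M, m ≠ f1 → m ≠ f2 → w m = v m) :
    hRop M γ J ef (prodState M n v) + hLop M γ J ef1 (prodState M n' w) = 0 := by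
  classical
  set n'' : Fin M → Bool := hop M n f f1 with hn''
  -- images of basis vectors
  have hRimg : ∀ s : Fin M → Bool, hRop M γ J ef (e M (n, s)) =
      (-(γ ef : ℂ)) • e M (n'', s)
        + (if s f1 = false then
            (J ef : ℂ) • e M (n'', Function.update s f1 true) else 0) := by
    intro s
    rw [hRop_apply_e']
    simp only [hL1, hR1]
    rw [if_pos ⟨hn, hn1⟩]
  have hLimg : ∀ s : Fin M → Bool, hLop M γ J ef1 (e M (n', s)) =
      (-(γ ef1 : ℂ)) • e M (n'', s)
        + (if s f2 = true then
            (J ef1 : ℂ) • e M (n'', Function.update s f2 false) else 0) := by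
    intro s
    rw [hLop_apply_e']
    simp only [hL2, hR2]
    rw [if_pos ⟨hn'2, hn'1⟩, hhop]
  -- expand
  rw [op_prodState' M _ n v, op_prodState' M _ n' w]
  simp only [hRimg, hLimg, smul_add, smul_ite, smul_zero, smul_smul]
  rw [Finset.sum_add_distrib, Finset.sum_add_distrib]
  -- reindex the J sums
  have hinv1 : Function.Involutive (fun s : Fin M → Bool => Function.update s f1 (!s f1)) := by
    intro s
    simp [Function.update_idem, Function.update_self, Bool.not_not, Function.update_eq_self]
  have hinv2 : Function.Involutive (fun s : Fin M → Bool => Function.update s f2 (!s f2)) := by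
    intro s
    simp [Function.update_idem, Function.update_self, Bool.not_not, Function.update_eq_self]
  have hB : (∑ s : Fin M → Bool,
        if s f1 = false then
          ((∏ m : Fin M, v m (s m)) * (J ef : ℂ)) • e M (n'', Function.update s f1 true) else 0)
      = ∑ t : Fin M → Bool,
        if t f1 = true then
          ((∏ m : Fin M, v m (Function.update t f1 false m)) * (J ef : ℂ)) • e M (n'', t)
        else 0 := by
    apply Fintype.sum_bijective _ hinv1.bijective
    intro s
    by_cases hs : s f1 = false
    · have h1 : Function.update s f1 false = s := by rw [← hs, Function.update_eq_self]
      simp [hs, Function.update_idem, Function.update_self, h1]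
    · have hs' : s f1 = true := by revert hs; cases s f1 <;> simp
      simp [hs, hs', Function.update_self]
  have hD : (∑ s : Fin M → Bool,
        if s f2 = true then
          ((∏ m : Fin M, w m (s m)) * (J ef1 : ℂ)) • e M (n'', Function.update s f2 false) else 0)
      = ∑ t : Fin M → Bool,
        if t f2 = false then
          ((∏ m : Fin M, w m (Function.update t f2 true m)) * (J ef1 : ℂ)) • e M (n'', t)
        else 0 := by
    apply Fintype.sum_bijective _ hinv2.bijective
    intro s
    by_cases hs : s f2 = true
    · have h1 : Function.update s f2 true = s := by rw [← hs, Function.update_eq_self]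
      simp [hs, Function.update_idem, Function.update_self, h1]
    · have hs' : s f2 = false := by revert hs; cases s f2 <;> simp
      simp [hs, hs', Function.update_self]
  rw [hB, hD]
  rw [← Finset.sum_add_distrib, ← Finset.sum_add_distrib, ← Finset.sum_add_distrib]
  apply Finset.sum_eq_zero
  intro t _
  -- turn everything into a single scalar multiple of e M (n'', t)
  have hite : ∀ (c : Prop) [Decidable c] (x : ℂ) (E : V M),
      (if c then x • E else 0) = (if c then x else 0) • E := by
    intro c _ x E; split <;> simp
  rw [hite, hite, ← add_smul, ← add_smul, ← add_smul]
  -- scalar identity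
  have hsplit : ∀ g : Fin M → ℂ, ∏ m : Fin M, g m
      = g f1 * (g f2 * ∏ m ∈ (Finset.univ.erase f1).erase f2, g m) := by
    intro g
    rw [← Finset.mul_prod_erase Finset.univ g (Finset.mem_univ f1),
        ← Finset.mul_prod_erase (Finset.univ.erase f1) g
          (Finset.mem_erase.mpr ⟨hf12.symm, Finset.mem_univ f2⟩)]
  have hmemS : ∀ m : Fin M, m ∈ (Finset.univ.erase f1).erase f2 → m ≠ f1 ∧ m ≠ f2 := by
    intro m hm
    obtain ⟨hm2, hm1⟩ := Finset.mem_erase.mp hm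
    exact ⟨(Finset.mem_erase.mp hm1).1, hm2⟩
  set B0 : ℂ := ∏ m ∈ (Finset.univ.erase f1).erase f2, v m (t m) with hB0
  have hP : (∏ m : Fin M, v m (t m)) = v f1 (t f1) * (v f2 (t f2) * B0) := hsplit _
  have hPu : (∏ m : Fin M, v m (Function.update t f1 false m))
      = v f1 false * (v f2 (t f2) * B0) := by
    rw [hsplit]
    rw [Function.update_self, Function.update_of_ne hf12.symm]
    congr 2
    exact Finset.prod_congr rfl fun m hm => by
      rw [Function.update_of_ne (hmemS m hm).1]
  have hQ : (∏ m : Fin M, w m (t m)) = v1' (t f1) * (v2' (t f2) * B0) := by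
    rw [hsplit, hwf1, hwf2]
    congr 2
    exact Finset.prod_congr rfl fun m hm => by
      rw [hwo m (hmemS m hm).1 (hmemS m hm).2]
  have hQu : (∏ m : Fin M, w m (Function.update t f2 true m))
      = v1' (t f1) * (v2' true * B0) := by
    rw [hsplit, hwf1, hwf2]
    rw [Function.update_self, Function.update_of_ne hf12]
    congr 2
    exact Finset.prod_congr rfl fun m hm => by
      rw [hwo m (hmemS m hm).1 (hmemS m hm).2,
        Function.update_of_ne (hmemS m hm).2]
  rw [hP, hQ]
  cases ht1 : t f1 <;> cases ht2 : t f2 <;>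
    simp only [if_pos, if_neg, ite_true, ite_false, Bool.false_eq_true, Bool.true_eq_false,
      not_false_eq_true, hPu, hQu, ht1, ht2, hv1t, hv1f, hv2t, hv2f] <;>
  · convert zero_smul ℂ (e M (n'', t)) using 2
    field_simp
    ring

lemma hop_aux (M : ℕ) (n : Fin M → Bool) (f f1 f2 : Fin M)
    (hff2 : f ≠ f2) (hf12 : f1 ≠ f2) (hn2 : n f2 = false) :
    hop M (Function.update (Function.update n f false) f2 true) f2 f1
      = hop M n f f1 := by
  funext x
  simp only [hop, Function.update_apply]
  by_cases hx1 : x = f1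
  · simp [hx1]
  · by_cases hx2 : x = f2
    · subst hx2
      simp [hx1, (Ne.symm hff2), hn2]
    · simp [hx1, hx2]

end QuantumBreakdown
open QuantumBreakdown

/-- Lemma 1. Let site `f = i+1` (so `f ≤ M−2` means `i+2 < M`)
satisfy `n_f = 1`, `n_{f+1} = n_{f+2} = 0`, with `γ_f ≠ 0` and `γ_{f+1} ≠ 0`.
Modifying the spin vectors at sites `f+1` and `f+2` as prescribed and moving the
fermion from `f` to `f+2` gives `ĥ^{(R)}_f Π(n,v) + ĥ^{(L)}_{f+2} Π(n',w) = 0`. -/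
theorem lemma_move_right_cancelled_by_move_left (M : ℕ) (hM : 3 ≤ M)
    (γ J : Fin (M - 1) → ℝ) (i : ℕ) (h2 : i + 2 < M)
    (n : Fin M → Bool)
    (hn : n ⟨i, by omega⟩ = true)
    (hn1 : n ⟨i + 1, by omega⟩ = false)
    (hn2 : n ⟨i + 2, h2⟩ = false)
    (hγ1 : γ ⟨i, by omega⟩ ≠ 0) (hγ2 : γ ⟨i + 1, by omega⟩ ≠ 0)
    (v : Fin M → Bool → ℂ) :
    let ef : Fin (M - 1) := ⟨i, by omega⟩        -- edge f
    let ef1 : Fin (M - 1) := ⟨i + 1, by omega⟩   -- edge f+1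
    let v1' : Bool → ℂ := fun b =>
      if b then -(γ ef : ℂ) * v ⟨i + 1, by omega⟩ true + (J ef : ℂ) * v ⟨i + 1, by omega⟩ false
      else -(γ ef : ℂ) * v ⟨i + 1, by omega⟩ false
    let v2' : Bool → ℂ := fun b =>
      if b then ((γ ef1 : ℂ))⁻¹ * v ⟨i + 2, h2⟩ true
      else ((J ef1 : ℂ) / (γ ef1 : ℂ) ^ 2) * v ⟨i + 2, h2⟩ true
        + ((γ ef1 : ℂ))⁻¹ * v ⟨i + 2, h2⟩ false
    let w : Fin M → Bool → ℂ :=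
      Function.update (Function.update v ⟨i + 1, by omega⟩ v1') ⟨i + 2, h2⟩ v2'
    let n' : Fin M → Bool :=
      Function.update (Function.update n ⟨i, by omega⟩ false) ⟨i + 2, h2⟩ true
    hRop M γ J ef (prodState M n v) + hLop M γ J ef1 (prodState M n' w) = 0 := by
  intro ef ef1 v1' v2' w n'
  have hf12 : (⟨i + 1, by omega⟩ : Fin M) ≠ ⟨i + 2, h2⟩ :=
    Fin.ne_of_val_ne (show i + 1 ≠ i + 2 by omega)
  have hf1f : (⟨i + 1, by omega⟩ : Fin M) ≠ ⟨i, by omega⟩ :=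
    Fin.ne_of_val_ne (show i + 1 ≠ i by omega)
  have hff2 : (⟨i, by omega⟩ : Fin M) ≠ ⟨i + 2, h2⟩ :=
    Fin.ne_of_val_ne (show i ≠ i + 2 by omega)
  have hn'1 : Function.update (Function.update n ⟨i, by omega⟩ false) ⟨i + 2, h2⟩ true
      ⟨i + 1, by omega⟩ = false := by
    rw [Function.update_of_ne hf12, Function.update_of_ne hf1f]; exact hn1
  have hn'2 : Function.update (Function.update n ⟨i, by omega⟩ false) ⟨i + 2, h2⟩ true
      ⟨i + 2, h2⟩ = true := Function.update_self _ _ _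
  have hwf1 : Function.update (Function.update v ⟨i + 1, by omega⟩ v1') ⟨i + 2, h2⟩ v2'
      ⟨i + 1, by omega⟩ = v1' := by
    rw [Function.update_of_ne hf12, Function.update_self]
  have hwf2 : Function.update (Function.update v ⟨i + 1, by omega⟩ v1') ⟨i + 2, h2⟩ v2'
      ⟨i + 2, h2⟩ = v2' := Function.update_self _ _ _
  have hwo : ∀ m : Fin M, m ≠ ⟨i + 1, by omega⟩ → m ≠ ⟨i + 2, h2⟩ →
      Function.update (Function.update v ⟨i + 1, by omega⟩ v1') ⟨i + 2, h2⟩ v2' m = v m := by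
    intro m hm1 hm2
    rw [Function.update_of_ne hm2, Function.update_of_ne hm1]
  exact cancel_aux M γ J ef ef1 ⟨i, by omega⟩ ⟨i + 1, by omega⟩ ⟨i + 2, h2⟩
    rfl rfl rfl rfl hf12 n hn hn1 n' hn'1 hn'2
    (hop_aux M n ⟨i, by omega⟩ ⟨i + 1, by omega⟩ ⟨i + 2, h2⟩ hff2 hf12 hn2)
    (Complex.ofReal_ne_zero.mpr hγ2) v v1' v2' rfl rfl rfl rfl w hwf1 hwf2 hwo
end

section
/- For every M ≥ 2, if γ_m ≠ 0 for every edge m (the couplings J_m arbitrary, possibly non-uniform), then the kernel of H_γ + H_J restricted to the two-fermion sector W₂^↑ has dimension at least 2^{M−1}; i.e. the Q = 2 sector of the extended quantum breakdown model possesses exponentially many exact zero modes for every system size M. -/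
/-!
The states with the two fermions on neighbouring sites `k, k+1` and the first spin up are
linearly independent, `(M-1) 2^(M-1)` of them. Each term of `H_γ + H_J` moves one fermion of
such a pair one step outwards, producing fermions at distance two, and never acts on the first
spin; so `H_γ + H_J` maps their span into the span of the `(M-2) 2^(M-1)` gap states, and by
rank–nullity its kernel on the pair states has dimension at least `2^(M-1)`.
-/

open scoped BigOperators

open QuantumBreakdown

theorem Submodule.finrank_le_finrank_inf_ker_add {K V W : Type*} [DivisionRing K]
    [AddCommGroup V] [Module K V] [AddCommGroup W] [Module K W]
    [FiniteDimensional K V] [FiniteDimensional K W]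
    (f : V →ₗ[K] W) {U : Submodule K V} {T : Submodule K W} (h : U.map f ≤ T) :
    Module.finrank K U ≤ Module.finrank K ↥(U ⊓ LinearMap.ker f) + Module.finrank K T := by
  have hker : Module.finrank K (LinearMap.ker (f.domRestrict U)) =
      Module.finrank K ↥(U ⊓ LinearMap.ker f) := by
    rw [← Submodule.finrank_map_subtype_eq, LinearMap.ker_domRestrict,
      Submodule.map_comap_subtype]
  have hrange : Module.finrank K (LinearMap.range (f.domRestrict U)) ≤ Module.finrank K T := by
    rw [LinearMap.range_domRestrict]
    exact Submodule.finrank_mono h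
  have := (f.domRestrict U).finrank_range_add_finrank_ker
  omega

namespace QuantumBreakdown

variable (M : ℕ)

lemma mkOp_e (f : Cfg M → V M) (p : Cfg M) : mkOp M f (e M p) = f p := by
  rw [mkOp, e, ← Pi.basisFun_apply, Module.Basis.constr_basis]

def pairOcc (k : ℕ) : Fin M → Bool := fun i => decide (i.1 = k ∨ i.1 = k + 1)

def gapOcc (k : ℕ) : Fin M → Bool := fun i => decide (i.1 = k ∨ i.1 = k + 2)

def upSpin (s : Fin (M - 1) → Bool) : Fin M → Bool :=
  fun i => if h : i.1 = 0 then true else s ⟨i.1 - 1, by omega⟩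

lemma upSpin_zero (hM : 0 < M) (s : Fin (M - 1) → Bool) : upSpin M s ⟨0, hM⟩ = true := by
  simp [upSpin]

lemma upSpin_injective : Function.Injective (upSpin M) := by
  intro s t h
  funext j
  simpa [upSpin] using congrFun h ⟨j.1 + 1, by omega⟩

lemma update_upSpin (s : Fin (M - 1) → Bool) (m : Fin (M - 1)) (b : Bool) :
    Function.update (upSpin M s) (sR M m) b = upSpin M (Function.update s m b) := by
  funext i
  simp only [upSpin, Function.update_apply, sR, Fin.ext_iff]
  split_ifs <;> first | rfl | omega

lemma exists_hop_pairOcc_eq_gapOcc (k m : Fin (M - 1)) {a b : Fin M}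
    (hab : (a = sL M m ∧ b = sR M m) ∨ (a = sR M m ∧ b = sL M m))
    (ha : pairOcc M k a = true) (hb : pairOcc M k b = false) :
    ∃ j : Fin (M - 2), hop M (pairOcc M k) a b = gapOcc M j := by
  have := k.2
  have := m.2
  replace ha := of_decide_eq_true ha
  replace hb := of_decide_eq_false hb
  rcases hab with ⟨rfl, rfl⟩ | ⟨rfl, rfl⟩
  all_goals simp only [sL, sR] at ha hb
  -- the hop is outwards: `m = k + 1`, resp. `m + 1 = k`
  on_goal 1 => refine ⟨⟨k, by omega⟩, ?_⟩
  on_goal 2 => refine ⟨⟨m, by omega⟩, ?_⟩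
  all_goals
    funext i
    simp only [hop, Function.update_apply, pairOcc, gapOcc, sL, sR, Fin.ext_iff]
    rw [Bool.eq_iff_iff]
    simp only [Bool.decide_or, Bool.if_false_left, Bool.if_true_left, Bool.or_eq_true,
      decide_eq_true_eq, Bool.and_eq_true, Bool.not_eq_eq_eq_not, Bool.not_true,
      decide_eq_false_iff_not]
    omega

lemma nOcc_pairOcc (k : Fin (M - 1)) : nOcc M (pairOcc M k) = 2 := by
  have : (Finset.univ.filter fun i => pairOcc M k i = true) =
      {⟨k, by omega⟩, ⟨k + 1, by omega⟩} := by
    ext i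
    simp [pairOcc, Fin.ext_iff]
  rw [nOcc, this, Finset.card_pair (by simp [Fin.ext_iff])]

def pairCfg (x : Fin (M - 1) × (Fin (M - 1) → Bool)) : Cfg M := (pairOcc M x.1, upSpin M x.2)

def gapCfg (x : Fin (M - 2) × (Fin (M - 1) → Bool)) : Cfg M := (gapOcc M x.1, upSpin M x.2)

noncomputable def pairSpan : Submodule ℂ (V M) := Submodule.span ℂ (Set.range (e M ∘ pairCfg M))

noncomputable def gapSpan : Submodule ℂ (V M) := Submodule.span ℂ (Set.range (e M ∘ gapCfg M))

lemma pairCfg_injective : Function.Injective (pairCfg M) := by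
  rintro ⟨k, s⟩ ⟨k', s'⟩ h
  simp only [pairCfg, Prod.mk.injEq] at h
  obtain ⟨hk, hs⟩ := h
  have h₁ : k.1 = k' ∨ k.1 = k' + 1 := by simpa [pairOcc] using congrFun hk ⟨k, by omega⟩
  have h₂ : k'.1 = k ∨ k'.1 = k + 1 := by simpa [pairOcc] using congrFun hk.symm ⟨k', by omega⟩
  rw [Fin.ext (by omega : k.1 = k'), upSpin_injective M hs]

lemma finrank_pairSpan : Module.finrank ℂ (pairSpan M) = (M - 1) * 2 ^ (M - 1) := by
  have hli : LinearIndependent ℂ (e M ∘ pairCfg M) := by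
    have : e M = Pi.basisFun ℂ (Cfg M) := by
      funext p
      rw [e, Pi.basisFun_apply]
    rw [this]
    exact (Pi.basisFun ℂ (Cfg M)).linearIndependent.comp _ (pairCfg_injective M)
  rw [pairSpan, finrank_span_eq_card hli]
  simp

lemma finrank_gapSpan_le : Module.finrank ℂ (gapSpan M) ≤ (M - 2) * 2 ^ (M - 1) := by
  refine (finrank_range_le_card (R := ℂ) (e M ∘ gapCfg M)).trans_eq ?_
  simp

lemma pairSpan_le_sectorUp (hM : 0 < M) : pairSpan M ≤ sectorUp M hM 2 :=
  Submodule.span_mono <| Set.range_subset_iff.2 fun x =>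
    ⟨pairCfg M x, nOcc_pairOcc M x.1, upSpin_zero M hM x.2, rfl⟩

lemma e_hop_pairOcc_mem_gapSpan (k m : Fin (M - 1)) {a b : Fin M}
    (hab : (a = sL M m ∧ b = sR M m) ∨ (a = sR M m ∧ b = sL M m))
    (ha : pairOcc M k a = true) (hb : pairOcc M k b = false) (s : Fin (M - 1) → Bool) :
    e M (hop M (pairOcc M k) a b, upSpin M s) ∈ gapSpan M := by
  obtain ⟨j, hj⟩ := exists_hop_pairOcc_eq_gapOcc M k m hab ha hb
  rw [hj]
  exact Submodule.subset_span ⟨(j, s), rfl⟩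

lemma Hgam_e_pairCfg_mem_gapSpan (γ : Fin (M - 1) → ℝ) (x : Fin (M - 1) × (Fin (M - 1) → Bool)) :
    Hgam M γ (e M (pairCfg M x)) ∈ gapSpan M := by
  rw [Hgam, mkOp_e]
  refine neg_mem (Submodule.sum_mem _ fun m _ => Submodule.smul_mem _ _ (add_mem ?_ ?_))
  all_goals split_ifs with h
  · exact e_hop_pairOcc_mem_gapSpan M x.1 m (.inl ⟨rfl, rfl⟩) h.1 h.2 x.2
  · exact zero_mem _
  · exact e_hop_pairOcc_mem_gapSpan M x.1 m (.inr ⟨rfl, rfl⟩) h.1 h.2 x.2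
  · exact zero_mem _

lemma HJop_e_pairCfg_mem_gapSpan (J : Fin (M - 1) → ℝ) (x : Fin (M - 1) × (Fin (M - 1) → Bool)) :
    HJop M J (e M (pairCfg M x)) ∈ gapSpan M := by
  rw [HJop, mkOp_e]
  refine Submodule.sum_mem _ fun m _ => Submodule.smul_mem _ _ (add_mem ?_ ?_)
  all_goals split_ifs with h
  · rw [pairCfg, update_upSpin]
    exact e_hop_pairOcc_mem_gapSpan M x.1 m (.inl ⟨rfl, rfl⟩) h.1 h.2.1 _
  · exact zero_mem _
  · rw [pairCfg, update_upSpin]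
    exact e_hop_pairOcc_mem_gapSpan M x.1 m (.inr ⟨rfl, rfl⟩) h.1 h.2.1 _
  · exact zero_mem _

end QuantumBreakdown

/-- for every `M ≥ 2` and nonvanishing hoppings `γ_m ≠ 0`
(`J` arbitrary, possibly non-uniform), the kernel of `H_γ + H_J` restricted to
the two-fermion sector `W₂^↑` has dimension at least `2^{M−1}`: exponentially
many exact zero modes in the `Q = 2` sector for every system size. -/
theorem zero_modes_Q2 (M : ℕ) (hM : 2 ≤ M)
    (γ J : Fin (M - 1) → ℝ) :
    2 ^ (M - 1) ≤ Module.finrank ℂ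
      ↥(sectorUp M (by omega) 2 ⊓ LinearMap.ker (Hgam M γ + HJop M J)) := by
  have hmaps : (pairSpan M).map (Hgam M γ + HJop M J) ≤ gapSpan M := by
    rw [pairSpan, Submodule.map_span_le]
    rintro _ ⟨x, rfl⟩
    exact add_mem (Hgam_e_pairCfg_mem_gapSpan M γ x) (HJop_e_pairCfg_mem_gapSpan M J x)
  have hrank := Submodule.finrank_le_finrank_inf_ker_add _ hmaps
  have hmono := Submodule.finrank_mono
    (inf_le_inf_right (LinearMap.ker (Hgam M γ + HJop M J)) (pairSpan_le_sectorUp M (by omega)))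
  have hcount : (M - 1) * 2 ^ (M - 1) = (M - 2) * 2 ^ (M - 1) + 2 ^ (M - 1) := by
    rw [← Nat.succ_mul]
    congr 1
    omega
  have := finrank_pairSpan M
  have := finrank_gapSpan_le M
  omega
end
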